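/- arXiv:1801.05489 — 4 statements merged into one kernel-verified Lean document; each statement's English description precedes it below -/
import Mathlib

section
/- Consider an instance of P_m||C_max with m machines and n jobs with processing times p_1 ≥ p_2 ≥ … ≥ p_n ≥ 0, and let k ≥ 1 with m ≥ k + 2. If in an LPT schedule some non-critical machine is assigned at least k jobs all of which have indices smaller than the critical job j′ (i.e., are processed before j′), then C^LPT ≤ ((k+1)/k − 1/(k·(m−1))) · C*. -/
open Finset

/-- Load of machine `i` under schedule `σ` with processing times `p`. -/
def mload {m n : ℕ} (p : Fin n → ℝ) (σ : Fin n → Fin m) (i : Fin m) : ℝ :=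
  ∑ j ∈ Finset.univ.filter (fun j => σ j = i), p j

/-- Makespan of a schedule: the maximum machine load. -/
noncomputable def makespan {m n : ℕ} (p : Fin n → ℝ) (σ : Fin n → Fin m) : ℝ :=
  ⨆ i : Fin m, mload p σ i

/-- Optimal makespan `C*`: minimum makespan over all schedules on `m` machines. -/
noncomputable def optMakespan (m : ℕ) {n : ℕ} (p : Fin n → ℝ) : ℝ :=
  ⨅ σ : Fin n → Fin m, makespan p σ

/-- Processing times are sorted non-increasingly and are nonnegative. -/
def SortedNonneg {n : ℕ} (p : Fin n → ℝ) : Prop :=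
  (∀ i j : Fin n, i ≤ j → p j ≤ p i) ∧ ∀ j, 0 ≤ p j

/-- Load of machine `i` just before job `j` is assigned, when all jobs of `T`
are placed first and the remaining jobs are assigned in index order:
it counts all jobs of `T` on machine `i` plus all jobs of index `< j` on machine `i`. -/
def prefLoad {m n : ℕ} (p : Fin n → ℝ) (σ : Fin n → Fin m) (T : Finset (Fin n))
    (j : Fin n) (i : Fin m) : ℝ :=
  ∑ j' ∈ Finset.univ.filter (fun j' => (j' ∈ T ∨ j' < j) ∧ σ j' = i), p j'

/-- `σ` is a list schedule obtained by first placing all jobs of `T` together on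
one machine and then assigning the remaining jobs in index order (i.e. in
non-increasing order of processing time, for sorted `p`), each to a machine of
minimal current load. -/
def IsLSAfter {m n : ℕ} (p : Fin n → ℝ) (T : Finset (Fin n)) (σ : Fin n → Fin m) : Prop :=
  (∀ j ∈ T, ∀ j' ∈ T, σ j = σ j') ∧
  ∀ j, j ∉ T → ∀ i, prefLoad p σ T j (σ j) ≤ prefLoad p σ T j i

/-- `σ` is an LPT schedule: jobs assigned in order `1,…,n`, each to a machine of
minimal current load. -/
def IsLPT {m n : ℕ} (p : Fin n → ℝ) (σ : Fin n → Fin m) : Prop :=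
  IsLSAfter p ∅ σ

/-- `j'` is the critical job of schedule `σ`: it is assigned to a critical machine
(one whose load equals the makespan), and it is the largest-indexed job assigned
to a critical machine. -/
def IsCriticalJob {m n : ℕ} (p : Fin n → ℝ) (σ : Fin n → Fin m) (j' : Fin n) : Prop :=
  mload p σ (σ j') = makespan p σ ∧
  ∀ j : Fin n, mload p σ (σ j) = makespan p σ → j ≤ j'

/-- The (1-based) position of job `j'` on its machine: the number of jobs of index
`≤ j'` assigned to the same machine as `j'`. -/
def posOn {m n : ℕ} (σ : Fin n → Fin m) (j' : Fin n) : ℕ :=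
  (Finset.univ.filter (fun t => σ t = σ j' ∧ t ≤ j')).card

/-- The tuple of the `k` consecutive jobs `j'-k+1, …, j'` (in 1-based terms). -/
def tupleSet {n : ℕ} (j' : Fin n) (k : ℕ) : Finset (Fin n) :=
  Finset.univ.filter (fun t => t ≤ j' ∧ j'.val < t.val + k)

/-- An LPT′ schedule for critical job `j'`: job `j'` is placed alone on a machine
first, then the remaining jobs are assigned in index order, each to a machine of
minimal current load. -/
def IsLPTprime {m n : ℕ} (p : Fin n → ℝ) (j' : Fin n) (σ' : Fin n → Fin m) : Prop :=
  IsLSAfter p {j'} σ'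

/-- An LPT″ schedule for critical job `j'` in position `k`: jobs `j'-k+1,…,j'` are
placed together on one machine first, then the remaining jobs are assigned in
non-increasing order of processing time, each to a machine of minimal current load. -/
def IsLPTsec {m n : ℕ} (p : Fin n → ℝ) (j' : Fin n) (k : ℕ) (σ'' : Fin n → Fin m) : Prop :=
  IsLSAfter p (tupleSet j' k) σ''

/-!
Let `s = p j'` and let `L` be the load of the critical machine when `j'` is assigned, so that
`C^LPT = L + s`. Before `j'` every machine carries at least `L` and machine `i` at least `k s`,
so counting the total work gives `(m - 1) L + k s + s ≤ m C*`. The remaining ingredient is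
`k s ≤ C*`. Weight every job `t` by `⌊p t / s⌋`: in a schedule of makespan below `k s` each machine
has weight at most `k - 1`, while in the LPT schedule the jobs before `j'` have weight at least
`k` on machine `i` and, by matching the jobs of any other machine with earlier jobs of `i`, at least
`k - 1` on every other machine. The two bounds combine, using `m ≥ k + 2`, to the claim.
-/
section Combinatorics

variable {α : Type*}

theorem card_mul_le_sum {S : Finset α} {p : α → ℝ} {s : ℝ} (h : ∀ t ∈ S, s ≤ p t) :
    #S * s ≤ ∑ t ∈ S, p t := by
  simpa only [nsmul_eq_mul] using card_nsmul_le_sum S p s h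

theorem card_le_sum_floor_div {S : Finset α} {p : α → ℝ} {s : ℝ} (hs : 0 < s)
    (h : ∀ t ∈ S, s ≤ p t) : #S ≤ ∑ t ∈ S, ⌊p t / s⌋₊ := by
  simpa using card_nsmul_le_sum S _ 1 fun t ht =>
    Nat.le_floor (by simpa [one_le_div hs] using h t ht)

theorem card_filter_lt_insert [LinearOrder α] {a g : α} {S : Finset α} (ha : a ∉ S) (hag : a < g) :
    #{x ∈ insert a S | x < g} = #{x ∈ S | x < g} + 1 := by
  rw [filter_insert, if_pos hag, card_insert_of_notMem (by simp [ha])]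

/-- The hypothesis lets one match the `r`-th element of `H` with an earlier, hence (as `p` is
antitone) no smaller, `r`-th element of `F`; each unmatched element of `F` contributes at least
`s`. -/
theorem sum_add_card_mul_le_of_card_lt [LinearOrder α] {p : α → ℝ} (hp : Antitone p) {s : ℝ}
    {H F : Finset α} (hF : ∀ f ∈ F, s ≤ p f)
    (hH : ∀ g ∈ H, #{x ∈ H | x < g} < #{x ∈ F | x < g}) :
    ∑ g ∈ H, p g + #F * s ≤ ∑ f ∈ F, p f + #H * s := by
  induction H using Finset.induction_on_min generalizing F with
  | empty => simpa using card_mul_le_sum hF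
  | insert a H haH ih =>
    have ha : a ∉ H := fun h => lt_irrefl a (haH a h)
    obtain ⟨f, hfF, hfa⟩ : ∃ f ∈ F, f < a := by
      simpa [Finset.Nonempty] using
        card_pos.1 ((Nat.zero_le _).trans_lt (hH a (mem_insert_self a H)))
    set f₀ := F.min' ⟨f, hfF⟩
    have hf₀a : f₀ < a := (F.min'_le f hfF).trans_lt hfa
    have hf₀F : f₀ ∈ F := F.min'_mem _
    have hF' : F = insert f₀ (F.erase f₀) := (insert_erase hf₀F).symm
    have ih' := ih (F := F.erase f₀) (fun f hf => hF f (mem_of_mem_erase hf)) fun g hg => by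
      have := hH g (mem_insert_of_mem hg)
      rw [card_filter_lt_insert ha (haH g hg), hF',
        card_filter_lt_insert (notMem_erase f₀ F) (hf₀a.trans (haH g hg))] at this
      omega
    rw [sum_insert ha, card_insert_of_notMem ha, ← add_sum_erase F p hf₀F,
      ← card_erase_add_one hf₀F]
    push_cast
    linarith [hp hf₀a.le]

theorem sub_one_mul_add_le_sum {ι : Type*} [Fintype ι] {P : ι → ℝ} {L : ℝ} (hL : ∀ ν, L ≤ P ν)
    (i : ι) : (Fintype.card ι - 1) * L + P i ≤ ∑ ν, P ν := by
  have := single_le_sum (fun ν _ => sub_nonneg.2 (hL ν)) (mem_univ i)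
  simp only [sum_sub_distrib, sum_const, card_univ, nsmul_eq_mul] at this
  linarith

end Combinatorics

section Makespan

variable {m n : ℕ} {p : Fin n → ℝ}

theorem mload_le_makespan (σ : Fin n → Fin m) (i : Fin m) : mload p σ i ≤ makespan p σ :=
  le_ciSup (Set.finite_range _).bddAbove i

theorem sum_le_mul_optMakespan (hm : 0 < m) : ∑ t, p t ≤ m * optMakespan m p := by
  have : Nonempty (Fin m) := ⟨⟨0, hm⟩⟩
  rw [← div_le_iff₀' (by positivity)]
  refine le_ciInf fun σ => ?_
  rw [div_le_iff₀' (by positivity), ← sum_fiberwise univ σ p]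
  calc ∑ i, mload p σ i ≤ ∑ _i : Fin m, makespan p σ := sum_le_sum fun i _ => mload_le_makespan σ i
    _ = m * makespan p σ := by simp

theorem sum_floor_div_le_of_makespan_lt {σ : Fin n → Fin m} (hp : ∀ t, 0 ≤ p t) {s : ℝ} (hs : 0 < s)
    {k : ℕ} (h : makespan p σ < k * s) : ∑ t, ⌊p t / s⌋₊ ≤ m * (k - 1) := by
  rw [← sum_fiberwise univ σ]
  have hmachine (i : Fin m) : ∑ t ∈ univ with σ t = i, ⌊p t / s⌋₊ < k := by
    have : ((∑ t ∈ univ with σ t = i, ⌊p t / s⌋₊ : ℕ) : ℝ) * s ≤ mload p σ i := by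
      rw [Nat.cast_sum, sum_mul]
      exact sum_le_sum fun t _ => (le_div_iff₀ hs).1 (Nat.floor_le (div_nonneg (hp t) hs.le))
    exact_mod_cast lt_of_mul_lt_mul_right ((this.trans (mload_le_makespan σ i)).trans_lt h) hs.le
  calc _ ≤ ∑ _i : Fin m, (k - 1) := sum_le_sum fun i _ => Nat.le_sub_one_of_lt (hmachine i)
    _ = m * (k - 1) := by simp

end Makespan

section LPT

variable {m n : ℕ} {p : Fin n → ℝ} {σ : Fin n → Fin m}

def jobsBefore (σ : Fin n → Fin m) (i : Fin m) (j : Fin n) : Finset (Fin n) :=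
  {t | σ t = i ∧ t < j}

theorem prefLoad_empty (j : Fin n) (i : Fin m) :
    prefLoad p σ ∅ j i = ∑ t ∈ jobsBefore σ i j, p t := by
  simp only [prefLoad, jobsBefore, notMem_empty, false_or, and_comm]

theorem sum_sum_jobsBefore {M : Type*} [AddCommMonoid M] (f : Fin n → M) (j : Fin n) :
    ∑ i, ∑ t ∈ jobsBefore σ i j, f t = ∑ t ∈ Iio j, f t := by
  rw [← sum_fiberwise (Iio j) σ f]
  congr! 2 with i
  ext t
  simp [jobsBefore, and_comm]

theorem filter_jobsBefore_lt {i : Fin m} {g j : Fin n} (hgj : g ≤ j) :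
    {x ∈ jobsBefore σ i j | x < g} = jobsBefore σ i g := by
  ext x
  simp only [jobsBefore, mem_filter, mem_univ, true_and]
  exact ⟨fun h => ⟨h.1.1, h.2⟩, fun h => ⟨⟨h.1, h.2.trans_le hgj⟩, h.2⟩⟩

theorem sum_jobsBefore_le_mload (hp : ∀ t, 0 ≤ p t) (i : Fin m) (j : Fin n) :
    ∑ t ∈ jobsBefore σ i j, p t ≤ mload p σ i :=
  sum_le_sum_of_subset_of_nonneg (fun t ht => by simp_all [jobsBefore]) fun t _ _ => hp t

theorem IsCriticalJob.makespan_eq {j : Fin n} (hj : IsCriticalJob p σ j) :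
    makespan p σ = p j + ∑ t ∈ jobsBefore σ (σ j) j, p t := by
  have hjobs : ({t | σ t = σ j} : Finset (Fin n)) = insert j (jobsBefore σ (σ j) j) := by
    ext t
    simp only [jobsBefore, mem_filter, mem_univ, true_and, mem_insert]
    refine ⟨fun ht => (hj.2 t (ht ▸ hj.1)).eq_or_lt.imp id (⟨ht, ·⟩), ?_⟩
    rintro (rfl | ⟨ht, -⟩) <;> trivial
  rw [← hj.1, mload, hjobs, sum_insert (by simp [jobsBefore])]

theorem IsLPT.sum_jobsBefore_le (hσ : IsLPT p σ) (j : Fin n) (i : Fin m) :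
    ∑ t ∈ jobsBefore σ (σ j) j, p t ≤ ∑ t ∈ jobsBefore σ i j, p t := by
  simpa only [prefLoad_empty] using hσ.2 j (notMem_empty j) i

/-- Otherwise, when `g` is assigned, the load of `i` would be smaller than that of `σ g`: the jobs
that `i` still receives before `j` weigh at least `s` each. -/
theorem IsLPT.card_jobsBefore_le (hσ : IsLPT p σ) {s : ℝ} (hs : 0 < s) {i : Fin m} {j : Fin n}
    (hge : ∀ t < j, s ≤ p t)
    (hA : ∑ t ∈ jobsBefore σ i j, p t < (#(jobsBefore σ i j) + 1) * s) {g : Fin n} (hgj : g < j) :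
    #(jobsBefore σ (σ g) g) ≤ #(jobsBefore σ i g) := by
  set F := jobsBefore σ i j
  have hlow : #(jobsBefore σ (σ g) g) * s ≤ ∑ t ∈ jobsBefore σ (σ g) g, p t :=
    card_mul_le_sum fun t ht => hge t ((mem_filter.1 ht).2.2.trans hgj)
  have hrest : #{x ∈ F | ¬x < g} * s ≤ ∑ t ∈ F with ¬t < g, p t :=
    card_mul_le_sum fun t ht => hge t (mem_filter.1 (mem_filter.1 ht).1).2.2
  have hsplit := sum_filter_add_sum_filter_not F (· < g) p
  have hcard := card_filter_add_card_filter_not (s := F) (· < g)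
  rw [filter_jobsBefore_lt hgj.le] at hsplit hcard
  rw [← hcard] at hA
  push_cast at hA
  have : (#(jobsBefore σ (σ g) g) : ℝ) * s < (#(jobsBefore σ i g) + 1) * s := by
    linarith [hσ.sum_jobsBefore_le g i]
  exact_mod_cast Nat.lt_add_one_iff.1 (by exact_mod_cast lt_of_mul_lt_mul_right this hs.le)

/-- Matching the later jobs of `ν` with earlier jobs of `i` shows that the first job of `ν` is
longer than `(k - c) * s`, where `c` is the number of jobs of `ν` before `j`. -/
theorem IsLPT.sub_one_le_sum_floor_div (hσ : IsLPT p σ) (hp : Antitone p) {s : ℝ} (hs : 0 < s)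
    {i ν : Fin m} {j : Fin n} {k : ℕ} (hge : ∀ t < j, s ≤ p t) (hk : k ≤ #(jobsBefore σ i j))
    (hA : ∑ t ∈ jobsBefore σ i j, p t < (k + 1) * s)
    (hAν : ∑ t ∈ jobsBefore σ i j, p t < ∑ t ∈ jobsBefore σ ν j, p t + s) :
    k - 1 ≤ ∑ t ∈ jobsBefore σ ν j, ⌊p t / s⌋₊ := by
  set F := jobsBefore σ i j
  set G := jobsBefore σ ν j
  have hFs : ∀ t ∈ F, s ≤ p t := fun t ht => hge t (mem_filter.1 ht).2.2
  have hkF : (k : ℝ) * s ≤ #F * s := mul_le_mul_of_nonneg_right (Nat.cast_le.2 hk) hs.le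
  have hF := card_mul_le_sum hFs
  rcases G.eq_empty_or_nonempty with hG | hG
  · rw [hG, sum_empty] at hAν
    have : (k : ℝ) < 1 := lt_of_mul_lt_mul_right (by linarith) hs.le
    have : k = 0 := by exact_mod_cast Nat.lt_one_iff.1 (by exact_mod_cast this)
    omega
  set g₀ := G.min' hG
  have hg₀ : g₀ ∈ G := G.min'_mem hG
  set H := G.erase g₀
  have hrank : ∀ g ∈ H, #{x ∈ H | x < g} < #{x ∈ F | x < g} := by
    intro g hg
    have hgG := mem_of_mem_erase hg
    have hg₀g : g₀ < g := (G.min'_le g hgG).lt_of_ne (ne_of_mem_erase hg).symm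
    obtain ⟨hνg, hgj⟩ : σ g = ν ∧ g < j := by simpa [G, jobsBefore] using hgG
    calc #{x ∈ H | x < g} < #{x ∈ G | x < g} :=
          card_lt_card ⟨filter_subset_filter _ (erase_subset _ _),
            fun h => by simpa [H] using h (mem_filter.2 ⟨hg₀, hg₀g⟩)⟩
      _ = #(jobsBefore σ (σ g) g) := by rw [hνg, filter_jobsBefore_lt hgj.le]
      _ ≤ #(jobsBefore σ i g) := hσ.card_jobsBefore_le hs hge (by linarith) hgj
      _ = #{x ∈ F | x < g} := by rw [filter_jobsBefore_lt hgj.le]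
  have hmatch := sum_add_card_mul_le_of_card_lt hp hFs hrank
  have hsplit : p g₀ + ∑ t ∈ H, p t = ∑ t ∈ G, p t := add_sum_erase G p hg₀
  have hfloor : p g₀ < (⌊p g₀ / s⌋₊ + 1) * s := (div_lt_iff₀ hs).1 (Nat.lt_floor_add_one _)
  have hH : #H ≤ ∑ t ∈ H, ⌊p t / s⌋₊ :=
    card_le_sum_floor_div hs fun t ht => hge t (mem_filter.1 (mem_of_mem_erase ht)).2.2
  have hfirst_real : (k : ℝ) - #H - 1 < ⌊p g₀ / s⌋₊ + 1 :=
    lt_of_mul_lt_mul_right (by linarith) hs.le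
  have hfirst : k < ⌊p g₀ / s⌋₊ + #H + 2 := by
    exact_mod_cast (by linarith : (k : ℝ) < ⌊p g₀ / s⌋₊ + #H + 2)
  have hsplitW : ⌊p g₀ / s⌋₊ + ∑ t ∈ H, ⌊p t / s⌋₊ = ∑ t ∈ G, ⌊p t / s⌋₊ :=
    add_sum_erase G (fun t => ⌊p t / s⌋₊) hg₀
  omega

theorem IsLPT.mul_le_optMakespan (hσ : IsLPT p σ) (hp : SortedNonneg p) (hm : 0 < m) {i : Fin m}
    {j : Fin n} {k : ℕ} {L : ℝ} (hk : k ≤ #(jobsBefore σ i j))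
    (hL : ∀ ν, L ≤ ∑ t ∈ jobsBefore σ ν j, p t) (hAL : ∑ t ∈ jobsBefore σ i j, p t < L + p j)
    (hwork : (m - 1) * L + ∑ t ∈ jobsBefore σ i j, p t + p j ≤ m * optMakespan m p) :
    k * p j ≤ optMakespan m p := by
  obtain ⟨hsorted, hnn⟩ := hp
  have hanti : Antitone p := fun a b h => hsorted a b h
  set s := p j
  set A := ∑ t ∈ jobsBefore σ i j, p t
  have hmR : (0 : ℝ) < m := Nat.cast_pos.2 hm
  have hC : 0 ≤ optMakespan m p :=
    nonneg_of_mul_nonneg_right ((sum_nonneg fun t _ => hnn t).trans (sum_le_mul_optMakespan hm)) hmR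
  by_contra! hlt
  have hks : 0 < (k : ℝ) * s := hC.trans_lt hlt
  have hs : 0 < s := pos_of_mul_pos_right hks (Nat.cast_nonneg k)
  have hk0 : 0 < k := by exact_mod_cast pos_of_mul_pos_left hks hs.le
  have : Nonempty (Fin m) := ⟨⟨0, hm⟩⟩
  obtain ⟨σ', hσ'⟩ := exists_lt_of_ciInf_lt hlt
  have hA : A < (k + 1) * s := by
    have h1 := mul_le_mul_of_nonneg_left (by linarith : A - s ≤ L)
      (sub_nonneg.2 (Nat.one_le_cast.2 hm))
    have h2 := mul_lt_mul_of_pos_left hlt hmR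
    exact lt_of_mul_lt_mul_left (by linarith : (m : ℝ) * A < m * ((k + 1) * s)) hmR.le
  have hge : ∀ t < j, s ≤ p t := fun t ht => hanti ht.le
  have hlower : m * (k - 1) < ∑ t ∈ Iio j, ⌊p t / s⌋₊ := by
    rw [← sum_sum_jobsBefore]
    calc m * (k - 1) = ∑ _ν : Fin m, (k - 1) := by simp
      _ < ∑ ν, ∑ t ∈ jobsBefore σ ν j, ⌊p t / s⌋₊ :=
        sum_lt_sum
          (fun ν _ => hσ.sub_one_le_sum_floor_div hanti hs hge hk hA
            (hAL.trans_le (add_le_add_left (hL ν) _)))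
          ⟨i, mem_univ i, (Nat.sub_one_lt hk0.ne').trans_le
            (hk.trans (card_le_sum_floor_div hs fun t ht => hge t (mem_filter.1 ht).2.2))⟩
  have hupper := sum_floor_div_le_of_makespan_lt hnn hs hσ'
  have := sum_le_univ_sum_of_nonneg (s := Iio j) (f := fun t => ⌊p t / s⌋₊) fun _ => Nat.zero_le _
  omega

end LPT

/-- Proposition 4: if in an LPT schedule a non-critical machine is
assigned at least `k` jobs, all processed before the critical job `j'`, and
`m ≥ k+2`, then `C^LPT ≤ ((k+1)/k − 1/(k·(m−1))) · C*`. -/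
theorem stmt1 {m n : ℕ} (k : ℕ) (hk : 1 ≤ k) (hm : k + 2 ≤ m)
    (p : Fin n → ℝ) (hp : SortedNonneg p)
    (σ : Fin n → Fin m) (hσ : IsLPT p σ)
    (j' : Fin n) (hj' : IsCriticalJob p σ j')
    (i : Fin m) (hi : mload p σ i ≠ makespan p σ)
    (hcard : k ≤ (Finset.univ.filter (fun t => σ t = i ∧ t < j')).card) :
    makespan p σ ≤ (((k : ℝ) + 1) / k - 1 / ((k : ℝ) * ((m : ℝ) - 1))) * optMakespan m p := by
  set C := optMakespan m p
  set s := p j'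
  set L := ∑ t ∈ jobsBefore σ (σ j') j', p t
  set A := ∑ t ∈ jobsBefore σ i j', p t
  have hC : makespan p σ = s + L := hj'.makespan_eq
  have hL : ∀ ν, L ≤ ∑ t ∈ jobsBefore σ ν j', p t := hσ.sum_jobsBefore_le j'
  have hAL : A < L + s := calc
    A ≤ mload p σ i := sum_jobsBefore_le_mload hp.2 i j'
    _ < makespan p σ := (mload_le_makespan σ i).lt_of_ne hi
    _ = L + s := by rw [hC, add_comm]
  have hkA : k * s ≤ A := (mul_le_mul_of_nonneg_right (Nat.cast_le.2 hcard) (hp.2 j')).trans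
    (card_mul_le_sum fun t ht => hp.1 t j' (mem_filter.1 ht).2.2.le)
  have hwork : (m - 1) * L + A + s ≤ m * C := calc
    (m - 1) * L + A + s ≤ ∑ ν, ∑ t ∈ jobsBefore σ ν j', p t + s := by
      simpa using sub_one_mul_add_le_sum hL i
    _ = ∑ t ∈ insert j' (Iio j'), p t := by rw [sum_sum_jobsBefore, sum_insert (by simp), add_comm]
    _ ≤ ∑ t, p t := sum_le_univ_sum_of_nonneg hp.2
    _ ≤ m * C := sum_le_mul_optMakespan (by omega)
  have hks : k * s ≤ C := hσ.mul_le_optMakespan hp (by omega) hcard hL hAL hwork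
  have hk0 : (0 : ℝ) < k := by exact_mod_cast hk
  have hmk : (0 : ℝ) ≤ m - k - 2 := by
    have : (k : ℝ) + 2 ≤ m := by exact_mod_cast hm
    linarith
  have hm1 : (0 : ℝ) < m - 1 := by linarith
  have hbound : k * (m - 1) * (s + L) ≤ ((k + 1) * (m - 1) - 1) * C := by
    nlinarith [mul_le_mul_of_nonneg_left hwork hk0.le, mul_le_mul_of_nonneg_left hkA hk0.le,
      mul_le_mul_of_nonneg_right hks hmk]
  rw [hC, show ((k : ℝ) + 1) / k - 1 / (k * (m - 1)) = ((k + 1) * (m - 1) - 1) / (k * (m - 1)) by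
    field_simp, div_mul_eq_mul_div, le_div_iff₀ (by positivity)]
  linarith
end

section
/- Consider an instance of P_m||C_max with m ≥ 2 machines and exactly n = 2m + 1 jobs with processing times p_1 ≥ p_2 ≥ … ≥ p_n ≥ 0. If p_{2m+1} ≥ p_1 − p_m and p_m + p_{2m} + p_{2m+1} > C*, then every optimal schedule satisfies C* ≥ p_{m−1} + p_m. -/
open Finset

/-!
Fix a schedule. If two of the `m` largest jobs share a machine, that machine carries at least
`p_{m-1} + p_m`. Otherwise the `m` largest jobs occupy all `m` machines, one each, and by
pigeonhole two of the remaining `m + 1` jobs share a machine with one of them, giving a load of at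
least `p_m + p_{2m} + p_{2m+1}`. The second alternative is ruled out for an optimal schedule by
`p_m + p_{2m} + p_{2m+1} > C*`. Indices here are 1-based; in the code `p_{i+1}` is `p ⟨i, _⟩`.
-/

lemma Finset.exists_ne_map_eq_or_three_map_eq {α β : Type*} [Fintype β] [DecidableEq β]
    (f : α → β) {S T : Finset α} (hS : #S = Fintype.card β) (hT : Fintype.card β < #T) :
    (∃ a ∈ S, ∃ b ∈ S, a ≠ b ∧ f a = f b) ∨
      ∃ a ∈ S, ∃ c ∈ T, ∃ d ∈ T, c ≠ d ∧ f c = f a ∧ f d = f a := by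
  by_cases hinj : Set.InjOn f S
  · right
    have himage : S.image f = univ :=
      eq_univ_of_card _ (by rw [card_image_of_injOn hinj, hS])
    obtain ⟨c, hc, d, hd, hcd, hfcd⟩ :=
      exists_ne_map_eq_of_card_lt_of_maps_to (t := univ) (by simpa using hT)
        (fun _ _ => mem_coe.2 (mem_univ _))
    obtain ⟨a, ha, hfa⟩ := mem_image.1 (himage ▸ mem_univ (f c))
    exact ⟨a, ha, c, hc, d, hd, hcd, hfa.symm, hfcd.symm.trans hfa.symm⟩
  · left
    simp only [Set.InjOn, mem_coe, not_forall] at hinj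
    obtain ⟨a, ha, b, hb, hfab, hab⟩ := hinj
    exact ⟨a, ha, b, hb, hab, hfab⟩

lemma Antitone.add_pred_le_add_of_ne {n : ℕ} {p : Fin n → ℝ} (hp : Antitone p) {a b : Fin n}
    (hab : a ≠ b) {k : ℕ} (hk : k < n) (ha : a.val ≤ k) (hb : b.val ≤ k) :
    p ⟨k - 1, by omega⟩ + p ⟨k, hk⟩ ≤ p a + p b := by
  wlog hlt : a < b generalizing a b
  · simpa [add_comm] using this hab.symm hb ha (lt_of_le_of_ne (not_lt.1 hlt) hab.symm)
  have hlt' : a.val < b.val := hlt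
  have hpa : p ⟨k - 1, by omega⟩ ≤ p a :=
    hp (Fin.mk_le_mk.2 (by omega) : a ≤ ⟨k - 1, by omega⟩)
  have hpb : p ⟨k, hk⟩ ≤ p b := hp (Fin.mk_le_mk.2 hb : b ≤ ⟨k, hk⟩)
  linarith

lemma sum_le_makespan {m n : ℕ} {p : Fin n → ℝ} (hp : ∀ j, 0 ≤ p j) (σ : Fin n → Fin m)
    {S : Finset (Fin n)} {i : Fin m} (hS : ∀ j ∈ S, σ j = i) :
    ∑ j ∈ S, p j ≤ makespan p σ :=
  calc ∑ j ∈ S, p j ≤ mload p σ i :=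
        sum_le_sum_of_subset_of_nonneg (fun j hj => by simpa using hS j hj)
          (fun j _ _ => hp j)
    _ ≤ makespan p σ := le_ciSup (Set.finite_range _).bddAbove i

lemma pair_or_triple_le_makespan {m n : ℕ} (hn : 2 * m < n) {p : Fin n → ℝ}
    (hp : SortedNonneg p) (σ : Fin n → Fin m) :
    p ⟨m - 2, by omega⟩ + p ⟨m - 1, by omega⟩ ≤ makespan p σ ∨
      p ⟨m - 1, by omega⟩ + p ⟨2 * m - 1, by omega⟩ + p ⟨2 * m, hn⟩ ≤
        makespan p σ := by
  obtain ⟨hsorted, hnonneg⟩ := hp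
  have hanti : Antitone p := fun i j hij => hsorted i j hij
  have hS : #(Iio (⟨m, by omega⟩ : Fin n)) = Fintype.card (Fin m) := by simp
  have hT : Fintype.card (Fin m) < #(Icc (⟨m, by omega⟩ : Fin n) ⟨2 * m, hn⟩) := by
    simp only [Fin.card_Icc, Fintype.card_fin]; omega
  rcases exists_ne_map_eq_or_three_map_eq σ hS hT with
    ⟨a, ha, b, hb, hab, hσ⟩ | ⟨a, ha, c, hc, d, hd, hcd, hσc, hσd⟩
  · left
    simp only [mem_Iio, Fin.lt_def] at ha hb
    calc p ⟨m - 2, by omega⟩ + p ⟨m - 1, by omega⟩ ≤ p a + p b := by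
          simpa only [Nat.sub_sub] using
            hanti.add_pred_le_add_of_ne hab (k := m - 1) (by omega) (by omega) (by omega)
      _ = ∑ j ∈ {a, b}, p j := (sum_pair hab).symm
      _ ≤ makespan p σ := sum_le_makespan hnonneg σ (i := σ a) (by simp [hσ])
  · right
    simp only [mem_Iio, mem_Icc, Fin.lt_def, Fin.le_def] at ha hc hd
    have hac : a ∉ ({c, d} : Finset _) := by
      simp only [mem_insert, mem_singleton, Fin.ext_iff]; omega
    calc p ⟨m - 1, by omega⟩ + p ⟨2 * m - 1, by omega⟩ + p ⟨2 * m, hn⟩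
        ≤ p a + (p c + p d) := by
          have hpa : p ⟨m - 1, by omega⟩ ≤ p a :=
            hanti (Fin.mk_le_mk.2 (by omega) : a ≤ ⟨m - 1, by omega⟩)
          have hpcd := hanti.add_pred_le_add_of_ne hcd hn (by omega) (by omega)
          linarith
      _ = ∑ j ∈ {a, c, d}, p j := by rw [sum_insert hac, sum_pair hcd]
      _ ≤ makespan p σ := sum_le_makespan hnonneg σ (i := σ a) (by simp [hσc, hσd])

/-- Proposition 10: for `n = 2m+1`, if `p_{2m+1} ≥ p_1 − p_m` and
`p_m + p_{2m} + p_{2m+1} > C*`, then `C* ≥ p_{m−1} + p_m`. -/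
theorem stmt7 {m : ℕ} (hm : 2 ≤ m)
    (p : Fin (2 * m + 1) → ℝ) (hp : SortedNonneg p)
    (h2 : p ⟨m - 1, by omega⟩ + p ⟨2 * m - 1, by omega⟩ + p ⟨2 * m, by omega⟩ >
      optMakespan m p) :
    optMakespan m p ≥ p ⟨m - 2, by omega⟩ + p ⟨m - 1, by omega⟩ := by
  have : Nonempty (Fin m) := ⟨⟨0, by omega⟩⟩
  obtain ⟨σ, hσ⟩ :=
    exists_eq_ciInf_of_finite (f := fun σ : Fin (2 * m + 1) → Fin m => makespan p σ)
  rw [optMakespan, ← hσ] at h2 ⊢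
  exact (pair_or_triple_le_makespan (Nat.lt_succ_self _) hp σ).resolve_right (not_le.2 h2)
end

section
/- Consider an instance of P_m||C_max with m ≥ 1 machines and n jobs with processing times p_1 ≥ p_2 ≥ … ≥ p_n ≥ 0, and an LPT schedule with critical job j′. If p_{j′} > C*/3, then the LPT schedule is optimal: C^LPT = C*. -/
open Finset

/-- if the critical job `j'` of an LPT schedule satisfies
`p_{j'} > C*/3`, then the LPT schedule is optimal. -/
theorem stmt18 {m n : ℕ} (hm : 1 ≤ m)
    (p : Fin n → ℝ) (hp : SortedNonneg p)
    (σ : Fin n → Fin m) (hσ : IsLPT p σ)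
    (j' : Fin n) (hj' : IsCriticalJob p σ j')
    (h : p j' > optMakespan m p / 3) :
    makespan p σ = optMakespan m p := by
  classical
  have hmne : Nonempty (Fin m) := ⟨⟨0, hm⟩⟩
  obtain ⟨hsort, hnn⟩ := hp
  obtain ⟨-, hls⟩ := hσ
  obtain ⟨hcrit, hmax⟩ := hj'
  -- an optimal schedule τ
  obtain ⟨τ, hτ⟩ := Finite.exists_min (fun σ₀ : Fin n → Fin m => makespan p σ₀)
  set C := optMakespan m p with hCdef
  have hCτ : C = makespan p τ := by
    refine le_antisymm (ciInf_le (Finite.bddBelow_range _) τ) (le_ciInf hτ)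
  have hmloadτ : ∀ i, mload p τ i ≤ C := by
    intro i
    rw [hCτ]
    exact le_ciSup (Finite.bddAbove_range _) i
  have hpleC : ∀ t : Fin n, p t ≤ C := by
    intro t
    refine le_trans ?_ (hmloadτ (τ t))
    exact Finset.single_le_sum (fun u _ => hnn u) (by simp)
  have hCpos : 0 < C := by have := hpleC j'; linarith
  have hpj'pos : 0 < p j' := by linarith
  have hlow : C ≤ makespan p σ := ciInf_le (Finite.bddBelow_range _) σ
  refine le_antisymm ?_ hlow
  by_contra hgt
  push_neg at hgt
  -- prefix loads
  set A : Fin m → Finset (Fin n) := fun i => univ.filter (fun t => t < j' ∧ σ t = i) with hAdef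
  have hpref : ∀ i, prefLoad p σ ∅ j' i = ∑ t ∈ A i, p t := by
    intro i
    unfold prefLoad
    simp [hAdef]
  have hLPT : ∀ i, ∑ t ∈ A (σ j'), p t ≤ ∑ t ∈ A i, p t := by
    intro i
    have := hls j' (by simp) i
    rwa [hpref, hpref] at this
  set s := ∑ t ∈ A (σ j'), p t with hsdef
  have hsplit : univ.filter (fun t => σ t = σ j') = insert j' (A (σ j')) := by
    ext t
    simp only [mem_filter, mem_univ, true_and, mem_insert, hAdef]
    constructor
    · intro ht
      rcases lt_or_eq_of_le (hmax t (by rw [ht]; exact hcrit)) with h1 | h1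
      · exact Or.inr ⟨h1, ht⟩
      · exact Or.inl h1
    · rintro (rfl | ⟨-, ht⟩)
      · rfl
      · exact ht
  have hjA : j' ∉ A (σ j') := by simp [hAdef]
  have hmsp : makespan p σ = p j' + s := by
    rw [← hcrit]
    unfold mload
    rw [hsplit, Finset.sum_insert hjA]
  have hs : C - p j' < s := by rw [hmsp] at hgt; linarith
  have hspos : 0 < s := by have := hpleC j'; linarith
  have hAne : ∀ i, 1 ≤ (A i).card := by
    intro i
    rcases Finset.eq_empty_or_nonempty (A i) with he | hne
    · exfalso
      have h1 := hLPT i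
      rw [he, Finset.sum_empty] at h1
      linarith
    · exact Finset.card_pos.mpr hne
  -- singles
  set T : Finset (Fin n) := univ.filter (fun t => t < j' ∧ (A (σ t)).card = 1) with hTdef
  have hTmem : ∀ t ∈ T, t < j' ∧ (A (σ t)).card = 1 := by
    intro t ht; simpa [hTdef] using ht
  have hAsingle : ∀ t ∈ T, A (σ t) = {t} := by
    intro t ht
    obtain ⟨ht1, ht2⟩ := hTmem t ht
    obtain ⟨u, hu⟩ := Finset.card_eq_one.mp ht2
    have htm : t ∈ A (σ t) := by simp [hAdef, ht1]
    rw [hu] at htm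
    rw [hu]
    rw [Finset.mem_singleton] at htm
    rw [htm]
  have hTbig : ∀ t ∈ T, C - p j' < p t := by
    intro t ht
    have h1 := hLPT (σ t)
    rw [hAsingle t ht, Finset.sum_singleton] at h1
    linarith
  have hσinj : Set.InjOn σ (T : Set (Fin n)) := by
    intro t ht u hu he
    have h1 := hAsingle t (by simpa using ht)
    have h2 := hAsingle u (by simpa using hu)
    rw [he, h2] at h1
    exact (Finset.singleton_injective h1).symm
  -- counting in τ
  set B : Fin m → Finset (Fin n) := fun i => univ.filter (fun t => t ≤ j' ∧ τ t = i) with hBdef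
  have hBload : ∀ i, ∑ t ∈ B i, p t ≤ C := by
    intro i
    refine le_trans ?_ (hmloadτ i)
    unfold mload
    refine Finset.sum_le_sum_of_subset_of_nonneg ?_ (fun t _ _ => hnn t)
    intro t ht
    simp only [hBdef, mem_filter, mem_univ, true_and] at ht ⊢
    exact ht.2
  have hB2 : ∀ i, (B i).card ≤ 2 := by
    intro i
    by_contra hc
    push_neg at hc
    have h1 : (B i).card • p j' ≤ ∑ t ∈ B i, p t := by
      refine Finset.card_nsmul_le_sum _ _ _ ?_
      intro t ht
      have : t ≤ j' := by simpa [hBdef] using (Finset.mem_filter.mp ht).2.1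
      exact hsort t j' this
    rw [nsmul_eq_mul] at h1
    have h3 : (3 : ℝ) ≤ ((B i).card : ℝ) := by exact_mod_cast hc
    have h4 : 3 * p j' ≤ ((B i).card : ℝ) * p j' :=
      mul_le_mul_of_nonneg_right h3 (le_of_lt hpj'pos)
    have h5 := hBload i
    rw [hCdef] at h
    linarith
  have hB1 : ∀ t ∈ T, ∀ u ∈ B (τ t), u = t := by
    intro t ht u hu
    by_contra hne
    obtain ⟨hu1, hu2⟩ : u ≤ j' ∧ τ u = τ t := by simpa [hBdef] using hu
    have hpair : p t + p u ≤ ∑ x ∈ B (τ t), p x := by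
      have hsub : ({t, u} : Finset (Fin n)) ⊆ B (τ t) := by
        intro x hx
        rcases Finset.mem_insert.mp hx with rfl | hx
        · exact Finset.mem_filter.mpr ⟨Finset.mem_univ _, le_of_lt (hTmem _ ht).1, rfl⟩
        · rw [Finset.mem_singleton] at hx
          subst hx
          exact hu
      have h6 := Finset.sum_le_sum_of_subset_of_nonneg hsub (fun x _ _ => hnn x)
      rwa [Finset.sum_pair (Ne.symm hne)] at h6
    have hput : p j' ≤ p u := hsort u j' hu1
    have h7 := hBload (τ t)
    have h8 := hTbig t ht
    linarith
  have hτinj : Set.InjOn τ (T : Set (Fin n)) := by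
    intro t ht u hu he
    have hum : u ∈ B (τ t) := by
      simp only [hBdef, mem_filter, mem_univ, true_and]
      exact ⟨le_of_lt (hTmem u (by simpa using hu)).1, he.symm⟩
    exact (hB1 t (by simpa using ht) u hum).symm
  -- card computations
  have hPcard : ∑ i : Fin m, (A i).card = j'.val := by
    have h1 : (univ.filter (fun t : Fin n => t < j')).card = ∑ i : Fin m, (A i).card := by
      refine Finset.card_eq_sum_card_fiberwise (f := σ) (fun x _ => Finset.mem_univ _) |>.trans ?_
      refine Finset.sum_congr rfl (fun i _ => ?_)
      congr 1
      rw [Finset.filter_filter]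
    rw [← h1]
    have h2 : (univ.filter (fun t : Fin n => t < j')) = Finset.Iio j' := by ext t; simp
    rw [h2, Fin.card_Iio]
  have hJcard : ∑ i : Fin m, (B i).card = j'.val + 1 := by
    have h1 : (univ.filter (fun t : Fin n => t ≤ j')).card = ∑ i : Fin m, (B i).card := by
      refine Finset.card_eq_sum_card_fiberwise (f := τ) (fun x _ => Finset.mem_univ _) |>.trans ?_
      refine Finset.sum_congr rfl (fun i _ => ?_)
      congr 1
      rw [Finset.filter_filter]
    rw [← h1]
    have h2 : (univ.filter (fun t : Fin n => t ≤ j')) = Finset.Iic j' := by ext t; simp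
    rw [h2, Fin.card_Iic]
  have himgcard : ∀ (f : Fin n → Fin m), Set.InjOn f (T : Set (Fin n)) →
      (T.image f).card = T.card := fun f hf => Finset.card_image_of_injOn hf
  have hite : ∀ (S : Finset (Fin m)),
      ∑ i : Fin m, (if i ∈ S then 1 else 0) = S.card := by
    intro S
    rw [Finset.sum_ite_mem, Finset.univ_inter, Finset.card_eq_sum_ones]
  -- inequality 1 : 2m ≤ j' + |T|
  have hsum1 : 2 * m ≤ j'.val + T.card := by
    have key : ∀ i : Fin m, 2 ≤ (A i).card + (if i ∈ T.image σ then 1 else 0) := by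
      intro i
      by_cases hi : i ∈ T.image σ
      · have := hAne i
        simp only [hi, if_true]
        omega
      · simp only [hi, if_false, add_zero]
        rcases Nat.lt_or_ge (A i).card 2 with h1 | h1
        · exfalso
          have h2 : (A i).card = 1 := by have := hAne i; omega
          obtain ⟨t, ht⟩ := Finset.card_eq_one.mp h2
          have htm : t ∈ A i := by rw [ht]; exact Finset.mem_singleton_self t
          simp only [hAdef, mem_filter, mem_univ, true_and] at htm
          apply hi
          rw [Finset.mem_image]
          refine ⟨t, ?_, htm.2⟩
          simp only [hTdef, mem_filter, mem_univ, true_and]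
          exact ⟨htm.1, by rw [htm.2, h2]⟩
        · exact h1
    calc 2 * m = ∑ _i : Fin m, 2 := by simp [mul_comm]
      _ ≤ ∑ i : Fin m, ((A i).card + (if i ∈ T.image σ then 1 else 0)) :=
          Finset.sum_le_sum (fun i _ => key i)
      _ = j'.val + T.card := by
          rw [Finset.sum_add_distrib, hPcard, hite, himgcard σ hσinj]
  -- inequality 2 : j' + 1 + |T| ≤ 2m
  have hsum2 : j'.val + 1 + T.card ≤ 2 * m := by
    have key : ∀ i : Fin m, (B i).card + (if i ∈ T.image τ then 1 else 0) ≤ 2 := by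
      intro i
      by_cases hi : i ∈ T.image τ
      · simp only [hi, if_true]
        obtain ⟨t, htT, hti⟩ := Finset.mem_image.mp hi
        have hcard : (B i).card ≤ 1 := by
          refine Finset.card_le_one.mpr ?_
          intro a ha b hb
          rw [← hti] at ha hb
          rw [hB1 t htT a ha, hB1 t htT b hb]
        omega
      · simp only [hi, if_false, add_zero]
        exact hB2 i
    calc j'.val + 1 + T.card
        = ∑ i : Fin m, ((B i).card + (if i ∈ T.image τ then 1 else 0)) := by
          rw [Finset.sum_add_distrib, hJcard, hite, himgcard τ hτinj]
      _ ≤ ∑ _i : Fin m, 2 := Finset.sum_le_sum (fun i _ => key i)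
      _ = 2 * m := by simp [mul_comm]
  omega
end

section
/- Consider an instance of P_m||C_max with m ≥ 1 machines and n jobs with processing times p_1 ≥ p_2 ≥ … ≥ p_n ≥ 0, and an LPT schedule with critical job j′. Then C^LPT ≤ (Σ_{j=1}^{j′} p_j)/m + p_{j′}·(1 − 1/m), and consequently C^LPT ≤ C* + p_{j′}·(1 − 1/m). -/
open Finset

/-- for an LPT schedule with critical job `j'`,
`C^LPT ≤ (Σ_{j=1}^{j'} p_j)/m + p_{j'}·(1 − 1/m)`, and consequently
`C^LPT ≤ C* + p_{j'}·(1 − 1/m)`. -/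
theorem stmt19 {m n : ℕ} (hm : 1 ≤ m)
    (p : Fin n → ℝ) (hp : SortedNonneg p)
    (σ : Fin n → Fin m) (hσ : IsLPT p σ)
    (j' : Fin n) (hj' : IsCriticalJob p σ j') :
    makespan p σ ≤ (∑ j ∈ Finset.univ.filter (fun j => j ≤ j'), p j) / (m : ℝ) +
      p j' * (1 - 1 / (m : ℝ)) ∧
    makespan p σ ≤ optMakespan m p + p j' * (1 - 1 / (m : ℝ)) := by

  have hm0 : (0:ℝ) < (m:ℝ) := by exact_mod_cast hm
  haveI : NeZero m := ⟨by omega⟩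
  -- basic facts about makespan
  have hle_sup : ∀ (τ : Fin n → Fin m) (i : Fin m), mload p τ i ≤ makespan p τ := by
    intro τ i
    exact le_ciSup (Set.Finite.bddAbove (Set.finite_range _)) i
  -- total sum equals sum of loads
  have hsum : ∀ (τ : Fin n → Fin m), ∑ i : Fin m, mload p τ i = ∑ j, p j := by
    intro τ
    unfold mload
    exact Finset.sum_fiberwise _ _ _
  -- all jobs on the critical machine have index ≤ j'
  have hcrit : ∀ j : Fin n, σ j = σ j' → j ≤ j' := by
    intro j hj
    exact hj'.2 j (by rw [hj, hj'.1])
  -- mload of critical machine = prefLoad + p j'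
  have hsetA : (Finset.univ.filter (fun j : Fin n => σ j = σ j'))
      = insert j' (Finset.univ.filter (fun j => j < j' ∧ σ j = σ j')) := by
    ext j
    simp only [Finset.mem_filter, Finset.mem_insert, Finset.mem_univ, true_and]
    constructor
    · intro h
      rcases lt_or_eq_of_le (hcrit j h) with h1 | h1
      · exact Or.inr ⟨h1, h⟩
      · exact Or.inl h1
    · rintro (rfl | ⟨_, h⟩) <;> [rfl; exact h]
  have hA : mload p σ (σ j') = prefLoad p σ ∅ j' (σ j') + p j' := by
    unfold mload prefLoad
    simp only [Finset.notMem_empty, false_or]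
    rw [hsetA, Finset.sum_insert (by simp)]
    ring
  -- minimality of prefLoad at σ j'
  have hmin : ∀ i, prefLoad p σ ∅ j' (σ j') ≤ prefLoad p σ ∅ j' i :=
    hσ.2 j' (Finset.notMem_empty _)
  -- sum of prefLoads equals sum over jobs < j'
  have hprefsum : ∑ i : Fin m, prefLoad p σ ∅ j' i
      = ∑ j ∈ Finset.univ.filter (fun j => j < j'), p j := by
    unfold prefLoad
    simp only [Finset.notMem_empty, false_or]
    have h1 : ∀ i : Fin m, Finset.univ.filter (fun j : Fin n => j < j' ∧ σ j = i)
        = (Finset.univ.filter (fun j => j < j')).filter (fun j => σ j = i) := by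
      intro i; rw [Finset.filter_filter]
    simp only [h1]
    exact Finset.sum_fiberwise _ _ _
  -- m * prefLoad(σ j') ≤ ∑ prefLoads
  have hbound : (m : ℝ) * prefLoad p σ ∅ j' (σ j')
      ≤ ∑ j ∈ Finset.univ.filter (fun j => j < j'), p j := by
    rw [← hprefsum]
    calc (m : ℝ) * prefLoad p σ ∅ j' (σ j')
        = ∑ _i : Fin m, prefLoad p σ ∅ j' (σ j') := by
          rw [Finset.sum_const, Finset.card_univ, Fintype.card_fin, nsmul_eq_mul]
      _ ≤ ∑ i : Fin m, prefLoad p σ ∅ j' i := Finset.sum_le_sum fun i _ => hmin i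
  -- split ∑_{≤ j'} into ∑_{< j'} + p j'
  have hsplit : ∑ j ∈ Finset.univ.filter (fun j => j ≤ j'), p j
      = (∑ j ∈ Finset.univ.filter (fun j => j < j'), p j) + p j' := by
    have : (Finset.univ.filter (fun j : Fin n => j ≤ j'))
        = insert j' (Finset.univ.filter (fun j => j < j')) := by
      ext j
      simp only [Finset.mem_filter, Finset.mem_insert, Finset.mem_univ, true_and]
      constructor
      · intro h
        rcases lt_or_eq_of_le h with h1 | h1
        · exact Or.inr h1
        · exact Or.inl h1
      · rintro (rfl | h) <;> [exact le_refl _; exact le_of_lt h]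
    rw [this, Finset.sum_insert (by simp)]
    ring
  -- part 1
  have part1 : makespan p σ ≤
      (∑ j ∈ Finset.univ.filter (fun j => j ≤ j'), p j) / (m : ℝ) +
        p j' * (1 - 1 / (m : ℝ)) := by
    rw [← hj'.1, hA, hsplit]
    have h2 : prefLoad p σ ∅ j' (σ j')
        ≤ (∑ j ∈ Finset.univ.filter (fun j => j < j'), p j) / (m : ℝ) := by
      rw [le_div_iff₀ hm0, mul_comm]
      exact hbound
    have : ((∑ j ∈ Finset.univ.filter (fun j => j < j'), p j) + p j') / (m : ℝ) +
        p j' * (1 - 1 / (m : ℝ))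
        = (∑ j ∈ Finset.univ.filter (fun j => j < j'), p j) / (m : ℝ) + p j' := by
      field_simp
      ring
    rw [this]
    linarith
  refine ⟨part1, ?_⟩
  -- part 2: lower bound on optimal makespan
  have hlb : ∀ τ : Fin n → Fin m,
      (∑ j ∈ Finset.univ.filter (fun j => j ≤ j'), p j) / (m : ℝ) ≤ makespan p τ := by
    intro τ
    rw [div_le_iff₀ hm0]
    calc ∑ j ∈ Finset.univ.filter (fun j => j ≤ j'), p j
        ≤ ∑ j, p j := Finset.sum_le_sum_of_subset_of_nonneg
          (Finset.filter_subset _ _) (fun j _ _ => hp.2 j)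
      _ = ∑ i : Fin m, mload p τ i := (hsum τ).symm
      _ ≤ ∑ _i : Fin m, makespan p τ := Finset.sum_le_sum fun i _ => hle_sup τ i
      _ = makespan p τ * (m : ℝ) := by
          rw [Finset.sum_const, Finset.card_univ, Fintype.card_fin, nsmul_eq_mul]; ring
  have hopt : (∑ j ∈ Finset.univ.filter (fun j => j ≤ j'), p j) / (m : ℝ)
      ≤ optMakespan m p := le_ciInf hlb
  linarith
end
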